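/- Let X_1,…,X_n be the indicators of red draws in the Pólya urn model, let X_n' be a random variable whose conditional distribution given (X_1,…,X_n) equals the conditional distribution of X_n given (X_1,…,X_{n−1}), let W = (1/n)∑_{j=1}^n X_j and W' = W − X_n/n + X_n'/n. Then E[(W' − W)² | W] = ((2n+b−a)W − 2nW² + a)/(n²(a+b+n−1)); equivalently, with λ = 1/(n(a+b+n−1)), one has (1/(2λ))·E[(W' − W)² | W] = W(1−W) + ((b−a)/(2n))·W + a/(2n). -/

import Mathlib

/-!
The pattern events `{X = x}`, `x ∈ {0,1}ⁿ`, partition `Ω` and `W` is constant on each of them,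
so it suffices to compare integrals over the level sets `{∑ X_j = k}`. On `{X = x}` we have
`(W' - W)² = (X' - X_n)² / n²`, and `(X' - X_n)²` is the indicator that `X'` differs from `X_n`;
the resampling hypothesis together with the predictive probability
`(r + c m) / (r + w + c (n - 1))` of the urn (`m` reds among the first `n - 1` draws) makes it
explicit. Summing over the patterns with `k` reds, a fraction `k / n` of which end with a red
draw by symmetry, gives the claimed quadratic in `W = k / n`.
-/

open MeasureTheory Set Filter Topology

noncomputable section

/-- The Pólya pmf of the vector `(X_1, …, X_n)` of indicators of red draws, evaluated at a
pattern `x ∈ {0,1}ⁿ` (as a `Bool`-vector): with `k = ∑ x_j`,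
`P(X = x) = ∏_{i<k}(r+ci) ∏_{j<n-k}(w+cj) / ∏_{l<n}(r+w+cl)`. -/
def polyaPMF (n r w c : ℕ) (x : Fin n → Bool) : ℝ :=
  ((∏ i ∈ Finset.range (Finset.univ.filter (fun j => x j = true)).card, ((r : ℝ) + c * i)) *
      ∏ j ∈ Finset.range (n - (Finset.univ.filter (fun j => x j = true)).card),
        ((w : ℝ) + c * j)) /
    ∏ l ∈ Finset.range n, ((r : ℝ) + w + c * l)

open scoped Finset Function

section Patterns

variable {n : ℕ}

def redCount (x : Fin n → Bool) : ℕ := #{j | x j = true}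

theorem val_lt_sub_one_iff_ne (hn : 0 < n) (j : Fin n) :
    (j : ℕ) < n - 1 ↔ j ≠ ⟨n - 1, Nat.sub_lt hn Nat.one_pos⟩ := by
  have := j.isLt
  simp only [ne_eq, Fin.ext_iff]
  omega

theorem redCount_le (x : Fin n → Bool) : redCount x ≤ n :=
  (Finset.card_filter_le _ _).trans (by simp)

theorem redCount_comp_perm (x : Fin n → Bool) (e : Equiv.Perm (Fin n)) :
    redCount (fun j => x (e j)) = redCount x := by
  unfold redCount
  rw [← Finset.card_map e.toEmbedding]
  congr 1
  ext j
  simp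

theorem redCount_update_true (x : Fin n → Bool) (i : Fin n) :
    redCount (Function.update x i true) = redCount (Function.update x i false) + 1 := by
  classical
  unfold redCount
  rw [← Finset.card_insert_of_notMem (a := i) (by simp)]
  congr 1
  ext j
  by_cases hj : j = i <;> simp [hj, Function.update_of_ne]

theorem redCount_eq_add_ite (x : Fin n → Bool) (i : Fin n) :
    (redCount x : ℝ) = redCount (Function.update x i false) + if x i then 1 else 0 := by
  cases hxi : x i
  · simp [← hxi]
  · have h := redCount_update_true x i
    rw [← hxi, Function.update_eq_self] at h
    simp [h]

/-- Double counting `∑_{redCount x = k} redCount x`, each coordinate contributing equally. -/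
theorem card_redCount_eq_and_apply (k : ℕ) (i : Fin n) :
    n * #{x : Fin n → Bool | redCount x = k ∧ x i = true} =
      k * #{x : Fin n → Bool | redCount x = k} := by
  classical
  have hsymm : ∀ j, #{x : Fin n → Bool | redCount x = k ∧ x j = true} =
      #{x : Fin n → Bool | redCount x = k ∧ x i = true} := fun j => by
    refine Finset.card_nbij' (fun x l => x (Equiv.swap j i l)) (fun x l => x (Equiv.swap j i l))
      ?_ ?_ ?_ ?_ <;> intro x hx <;> simp_all [redCount_comp_perm]
  calc n * #{x : Fin n → Bool | redCount x = k ∧ x i = true}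
      = ∑ j : Fin n, #{x : Fin n → Bool | redCount x = k ∧ x j = true} := by simp [hsymm]
    _ = ∑ x : Fin n → Bool with redCount x = k, redCount x := by
        simp only [← Finset.filter_filter, Finset.card_filter, redCount]
        exact Finset.sum_comm
    _ = k * #{x : Fin n → Bool | redCount x = k} := by
        rw [Finset.sum_congr rfl fun x hx => (Finset.mem_filter.mp hx).2]
        simp [mul_comm]

end Patterns

def polyaWeight (n r w c k : ℕ) : ℝ :=
  ((∏ i ∈ Finset.range k, ((r : ℝ) + c * i)) * ∏ j ∈ Finset.range (n - k), ((w : ℝ) + c * j)) /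
    ∏ l ∈ Finset.range n, ((r : ℝ) + w + c * l)

theorem polyaPMF_eq_polyaWeight (n r w c : ℕ) (x : Fin n → Bool) :
    polyaPMF n r w c x = polyaWeight n r w c (redCount x) := rfl

theorem polyaWeight_pos (n c : ℕ) {r w : ℕ} (hr : 0 < r) (hw : 0 < w) (k : ℕ) :
    0 < polyaWeight n r w c k := by
  have : (0 : ℝ) < r := by exact_mod_cast hr
  have : (0 : ℝ) < w := by exact_mod_cast hw
  exact div_pos (mul_pos (Finset.prod_pos fun _ _ => by positivity)
    (Finset.prod_pos fun _ _ => by positivity)) (Finset.prod_pos fun _ _ => by positivity)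

/-- The Pólya predictive probability: after `k` red among `n - 1` draws, the next draw is red
with probability `(r + c k) / (r + w + c (n - 1))`. -/
theorem polyaWeight_succ_mul (r w c : ℕ) {n k : ℕ} (hk : k < n) :
    polyaWeight n r w c (k + 1) * (r + w + c * (n - 1 : ℝ)) =
      (polyaWeight n r w c (k + 1) + polyaWeight n r w c k) * (r + c * k) := by
  obtain ⟨m, rfl⟩ := Nat.exists_eq_add_of_lt hk
  unfold polyaWeight
  rw [show k + m + 1 - k = m + 1 by omega, show k + m + 1 - (k + 1) = m by omega,
    Finset.prod_range_succ _ k, Finset.prod_range_succ _ m]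
  push_cast
  field_simp
  ring

theorem condExp_comap_ae_eq_comp_of_finset {Ω β : Type*} {mΩ : MeasurableSpace Ω}
    {μ : Measure Ω} [IsFiniteMeasure μ] [MeasurableSpace β] [MeasurableSingletonClass β]
    {W : Ω → β} (hW : Measurable W) (S : Finset β) (hWS : ∀ ω, W ω ∈ S)
    {φ : β → ℝ} (hφ : Measurable φ) {f : Ω → ℝ} (hf : Integrable f μ)
    (hfiber : ∀ v ∈ S, ∫ ω in W ⁻¹' {v}, f ω ∂μ = μ.real (W ⁻¹' {v}) * φ v) :
    μ[f | MeasurableSpace.comap W inferInstance] =ᵐ[μ] fun ω => φ (W ω) := by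
  classical
  have hφW : Integrable (fun ω => φ (W ω)) μ := by
    refine Integrable.of_bound (hφ.comp hW).aestronglyMeasurable (∑ v ∈ S, ‖φ v‖)
      (ae_of_all _ fun ω => ?_)
    exact Finset.single_le_sum (f := fun v => ‖φ v‖) (fun _ _ => norm_nonneg _) (hWS ω)
  refine (ae_eq_condExp_of_forall_setIntegral_eq hW.comap_le hf (fun _ _ _ => hφW.integrableOn)
    ?_ (hφ.comp (comap_measurable W)).aestronglyMeasurable).symm
  rintro _ ⟨B, -, rfl⟩ -
  have hB : W ⁻¹' B = ⋃ v ∈ S.filter (· ∈ B), W ⁻¹' {v} := by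
    ext ω
    simp [hWS ω]
  have hdisj : Set.PairwiseDisjoint ↑(S.filter (· ∈ B)) fun v => W ⁻¹' {v} :=
    fun v _ v' _ hv => Set.disjoint_singleton.mpr hv |>.preimage W
  have hmeas : ∀ v ∈ S.filter (· ∈ B), MeasurableSet (W ⁻¹' {v}) :=
    fun v _ => hW (measurableSet_singleton v)
  rw [hB, integral_biUnion_finset _ hmeas hdisj fun _ _ => hφW.integrableOn,
    integral_biUnion_finset _ hmeas hdisj fun _ _ => hf.integrableOn]
  refine Finset.sum_congr rfl fun v hv => ?_
  have hconst : Set.EqOn (fun ω => φ (W ω)) (fun _ => φ v) (W ⁻¹' {v}) := fun ω hω =>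
    congrArg φ hω
  rw [hfiber v (Finset.mem_filter.mp hv).1, setIntegral_congr_fun (hmeas v hv) hconst,
    setIntegral_const, smul_eq_mul]

section PatternSet

variable {Ω : Type*} {n : ℕ} (X : Fin n → Ω → ℝ)

def patternSet (x : Fin n → Bool) : Set Ω := {ω | ∀ j, X j ω = if x j then 1 else 0}

theorem measurableSet_patternSet [MeasurableSpace Ω] (hXm : ∀ j, Measurable (X j))
    (x : Fin n → Bool) : MeasurableSet (patternSet X x) := by
  simp only [patternSet, Set.ofPred_forall]
  exact MeasurableSet.iInter fun j => hXm j (measurableSet_singleton _)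

theorem pairwise_disjoint_patternSet : Pairwise (Disjoint on patternSet X) := by
  refine fun x y hxy => Set.disjoint_left.mpr fun ω hx hy => hxy (funext fun j => ?_)
  have h := (hx j).symm.trans (hy j)
  cases hxj : x j <;> cases hyj : y j <;> simp [hxj, hyj] at h ⊢

theorem mem_patternSet_decide (hX01 : ∀ j ω, X j ω = 0 ∨ X j ω = 1) (ω : Ω) :
    ω ∈ patternSet X fun j => decide (X j ω = 1) := fun j => by
  rcases hX01 j ω with h | h <;> simp [h]

variable {X}

theorem sum_eq_redCount_of_mem_patternSet {x : Fin n → Bool} {ω : Ω}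
    (hω : ω ∈ patternSet X x) : ∑ j, X j ω = redCount x := by
  simp [Finset.sum_congr rfl fun j _ => hω j, Finset.sum_boole, redCount]

theorem setOf_sum_eq_eq_biUnion_patternSet (hX01 : ∀ j ω, X j ω = 0 ∨ X j ω = 1) (k : ℕ) :
    {ω | ∑ j, X j ω = k} =
      ⋃ x ∈ ({x | redCount x = k} : Finset (Fin n → Bool)), patternSet X x := by
  ext ω
  simp only [Set.mem_ofPred_eq, Set.mem_iUnion, Finset.mem_filter, Finset.mem_univ, true_and,
    exists_prop]
  constructor
  · intro hk
    have hω := mem_patternSet_decide X hX01 ω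
    exact ⟨_, by exact_mod_cast (sum_eq_redCount_of_mem_patternSet hω).symm.trans hk, hω⟩
  · rintro ⟨x, rfl, hω⟩
    exact sum_eq_redCount_of_mem_patternSet hω

theorem mem_patternSet_update_iff {x : Fin n → Bool} {i : Fin n} {b : Bool} {ω : Ω} :
    ω ∈ patternSet X (Function.update x i b) ↔
      (X i ω = if b then 1 else 0) ∧ ∀ j ≠ i, X j ω = if x j then 1 else 0 := by
  constructor
  · intro h
    exact ⟨by simpa using h i, fun j hj => by simpa [hj] using h j⟩
  · rintro ⟨hi, h⟩ j
    by_cases hj : j = i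
    · subst hj; simpa using hi
    · simpa [hj] using h j hj

theorem setOf_forall_ne_eq_union_patternSet (hX01 : ∀ j ω, X j ω = 0 ∨ X j ω = 1)
    (x : Fin n → Bool) (i : Fin n) :
    {ω | ∀ j ≠ i, X j ω = if x j then 1 else 0} =
      patternSet X (Function.update x i true) ∪ patternSet X (Function.update x i false) := by
  ext ω
  rcases hX01 i ω with hi | hi <;> simp [mem_patternSet_update_iff, hi]

theorem setOf_eq_one_inter_setOf_forall_ne (x : Fin n → Bool) (i : Fin n) :
    {ω | X i ω = 1} ∩ {ω | ∀ j ≠ i, X j ω = if x j then 1 else 0} =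
      patternSet X (Function.update x i true) := by
  ext ω
  simp [mem_patternSet_update_iff]

end PatternSet

theorem setIntegral_eq_measureReal_inter_of_zero_or_one {Ω : Type*} [MeasurableSpace Ω]
    {μ : Measure Ω} {Y : Ω → ℝ} (hY : Measurable Y) (hY01 : ∀ ω, Y ω = 0 ∨ Y ω = 1)
    (s : Set Ω) : ∫ ω in s, Y ω ∂μ = μ.real ({ω | Y ω = 1} ∩ s) := by
  have hind : Y = {ω | Y ω = 1}.indicator 1 := funext fun ω => by
    rcases hY01 ω with h | h <;> simp [h]
  have hmeas : MeasurableSet {ω | Y ω = 1} := hY (measurableSet_singleton 1)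
  conv_lhs => rw [hind]
  rw [setIntegral_indicator hmeas, Pi.one_def, setIntegral_const, smul_eq_mul, mul_one,
    Set.inter_comm]

theorem integrable_sq_sub_of_zero_or_one {Ω : Type*} [MeasurableSpace Ω] {μ : Measure Ω}
    [IsFiniteMeasure μ] {Y Z : Ω → ℝ} (hY : Measurable Y) (hZ : Measurable Z)
    (hY01 : ∀ ω, Y ω = 0 ∨ Y ω = 1) (hZ01 : ∀ ω, Z ω = 0 ∨ Z ω = 1) :
    Integrable (fun ω => (Y ω - Z ω) ^ 2) μ :=
  Integrable.of_bound ((hY.sub hZ).pow_const 2).aestronglyMeasurable 1 (ae_of_all _ fun ω => by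
    rcases hY01 ω with h | h <;> rcases hZ01 ω with h' | h' <;> norm_num [h, h'])

section Polya

variable {Ω : Type*} [MeasurableSpace Ω] {μ : Measure Ω} {n r w c : ℕ}
  {X : Fin n → Ω → ℝ} {X' : Ω → ℝ}

def HasPolyaLaw (μ : Measure Ω) (X : Fin n → Ω → ℝ) (r w c : ℕ) : Prop :=
  ∀ x, μ (patternSet X x) = ENNReal.ofReal (polyaPMF n r w c x)

/-- `X'` is `X i` redrawn from its conditional law given the other coordinates, stated with
cross-multiplied measures so that no conditioning on null events is needed. -/
def IsResampling (μ : Measure Ω) (X : Fin n → Ω → ℝ) (X' : Ω → ℝ) (i : Fin n) : Prop :=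
  ∀ x : Fin n → Bool, μ ({ω | X' ω = 1} ∩ patternSet X x) *
      μ {ω | ∀ j ≠ i, X j ω = if x j then 1 else 0} =
    μ (patternSet X x) * μ ({ω | X i ω = 1} ∩ {ω | ∀ j ≠ i, X j ω = if x j then 1 else 0})

theorem measureReal_patternSet (hr : 0 < r) (hw : 0 < w)
    (hlaw : HasPolyaLaw μ X r w c) (x : Fin n → Bool) :
    μ.real (patternSet X x) = polyaWeight n r w c (redCount x) := by
  rw [measureReal_def, hlaw, polyaPMF_eq_polyaWeight,
    ENNReal.toReal_ofReal (polyaWeight_pos n c hr hw _).le]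

theorem measureReal_setOf_eq_one_inter_patternSet_mul (hXm : ∀ j, Measurable (X j))
    (hX01 : ∀ j ω, X j ω = 0 ∨ X j ω = 1) (hr : 0 < r) (hw : 0 < w)
    (hlaw : HasPolyaLaw μ X r w c) {i : Fin n} (hX' : IsResampling μ X X' i) (x : Fin n → Bool) :
    μ.real ({ω | X' ω = 1} ∩ patternSet X x) * (r + w + c * (n - 1 : ℝ)) =
      polyaWeight n r w c (redCount x) * (r + c * redCount (Function.update x i false)) := by
  set m := redCount (Function.update x i false)
  have hm1 : redCount (Function.update x i true) = m + 1 := redCount_update_true x i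
  have hmn : m < n := by have := redCount_le (Function.update x i true); omega
  have hne : Function.update x i true ≠ Function.update x i false := fun h => by
    simpa using congrFun h i
  have hcond := hX' x
  rw [setOf_eq_one_inter_setOf_forall_ne, setOf_forall_ne_eq_union_patternSet hX01,
    measure_union (pairwise_disjoint_patternSet X hne) (measurableSet_patternSet X hXm _),
    hlaw, hlaw, hlaw] at hcond
  have hq := polyaWeight_pos n c hr hw
  have hcond' := congrArg ENNReal.toReal hcond
  simp only [ENNReal.toReal_mul, ENNReal.toReal_add ENNReal.ofReal_ne_top ENNReal.ofReal_ne_top,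
    polyaPMF_eq_polyaWeight, ENNReal.toReal_ofReal (hq _).le, hm1, ← measureReal_def] at hcond'
  refine mul_right_cancel₀ (add_pos (hq (m + 1)) (hq m)).ne' ?_
  linear_combination (r + w + c * (n - 1 : ℝ)) * hcond' +
    polyaWeight n r w c (redCount x) * polyaWeight_succ_mul r w c hmn

theorem setIntegral_patternSet_sq_sub_mul [IsFiniteMeasure μ] (hXm : ∀ j, Measurable (X j))
    (hX'm : Measurable X') (hX01 : ∀ j ω, X j ω = 0 ∨ X j ω = 1)
    (hX'01 : ∀ ω, X' ω = 0 ∨ X' ω = 1) (hr : 0 < r) (hw : 0 < w)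
    (hlaw : HasPolyaLaw μ X r w c) {i : Fin n} (hX' : IsResampling μ X X' i) (x : Fin n → Bool) :
    (∫ ω in patternSet X x, (X' ω - X i ω) ^ 2 ∂μ) * (r + w + c * (n - 1 : ℝ)) =
      polyaWeight n r w c (redCount x) * (r + c * redCount x +
        (if x i then 1 else 0) * (w - r + c * n - 2 * c * redCount x)) := by
  set b : ℝ := if x i then 1 else 0
  have hswitch := measureReal_setOf_eq_one_inter_patternSet_mul hXm hX01 hr hw hlaw hX' x
  have hcount := redCount_eq_add_ite x i
  have hsq : Set.EqOn (fun ω => (X' ω - X i ω) ^ 2) (fun ω => (1 - 2 * b) * X' ω + b)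
      (patternSet X x) := fun ω hω => by
    simp only [hω i, b]
    rcases hX'01 ω with h | h <;> cases x i <;> norm_num [h]
  have hX'int : Integrable X' μ :=
    Integrable.of_bound hX'm.aestronglyMeasurable 1 (ae_of_all _ fun ω => by
      rcases hX'01 ω with h | h <;> simp [h])
  rw [setIntegral_congr_fun (measurableSet_patternSet X hXm x) hsq,
    integral_add (hX'int.integrableOn.const_mul _) (integrableOn_const (by finiteness)),
    integral_const_mul, setIntegral_eq_measureReal_inter_of_zero_or_one hX'm hX'01,
    setIntegral_const, smul_eq_mul, measureReal_patternSet hr hw hlaw]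
  cases hxi : x i <;> simp only [b, hxi, Bool.false_eq_true, if_true, if_false] at hcount ⊢
  · linear_combination hswitch - polyaWeight n r w c (redCount x) * c * hcount
  · linear_combination -hswitch + polyaWeight n r w c (redCount x) * c * hcount

theorem sum_setIntegral_patternSet_sq_sub_mul [IsFiniteMeasure μ] (hXm : ∀ j, Measurable (X j))
    (hX'm : Measurable X') (hX01 : ∀ j ω, X j ω = 0 ∨ X j ω = 1)
    (hX'01 : ∀ ω, X' ω = 0 ∨ X' ω = 1) (hr : 0 < r) (hw : 0 < w)
    (hlaw : HasPolyaLaw μ X r w c) {i : Fin n} (hX' : IsResampling μ X X' i) (k : ℕ) :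
    (∑ x : Fin n → Bool with redCount x = k, ∫ ω in patternSet X x, (X' ω - X i ω) ^ 2 ∂μ) *
        (n * (r + w + c * (n - 1 : ℝ))) =
      #{x : Fin n → Bool | redCount x = k} * polyaWeight n r w c k *
        (k * w + (n - k) * r + 2 * c * k * (n - k)) := by
  classical
  set C : Finset (Fin n → Bool) := {x | redCount x = k}
  have hsum : (∑ x ∈ C, ∫ ω in patternSet X x, (X' ω - X i ω) ^ 2 ∂μ) *
      (r + w + c * (n - 1 : ℝ)) = polyaWeight n r w c k *
        (#C * (r + c * k) + #{x ∈ C | x i = true} * (w - r + c * n - 2 * c * k)) := by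
    rw [Finset.sum_mul, Finset.sum_congr rfl fun x hx => by
      rw [setIntegral_patternSet_sq_sub_mul hXm hX'm hX01 hX'01 hr hw hlaw hX' x,
        (Finset.mem_filter.mp hx).2]]
    simp only [mul_add, Finset.sum_add_distrib, ← Finset.sum_mul, ← Finset.mul_sum,
      Finset.sum_boole, Finset.sum_const, nsmul_eq_mul]
    ring
  have hcount : (n : ℝ) * #{x ∈ C | x i = true} = k * #C := by
    rw [Finset.filter_filter]
    exact_mod_cast card_redCount_eq_and_apply k i
  linear_combination (n : ℝ) * hsum + polyaWeight n r w c k * (w - r + c * n - 2 * c * k) * hcount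

theorem setIntegral_setOf_sum_eq_sq_sub_div [IsFiniteMeasure μ] (hXm : ∀ j, Measurable (X j))
    (hX'm : Measurable X') (hX01 : ∀ j ω, X j ω = 0 ∨ X j ω = 1)
    (hX'01 : ∀ ω, X' ω = 0 ∨ X' ω = 1) (hn : 0 < n) (hr : 0 < r) (hw : 0 < w) (hc : 0 < c)
    (hlaw : HasPolyaLaw μ X r w c) {i : Fin n} (hX' : IsResampling μ X X' i) (k : ℕ) :
    (∫ ω in {ω | ∑ j, X j ω = k}, (X' ω - X i ω) ^ 2 ∂μ) / n ^ 2 =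
      μ.real {ω | ∑ j, X j ω = k} *
        (((2 * n + w / c - r / c) * (k / n) - 2 * n * (k / n) ^ 2 + r / c) /
          (n ^ 2 * (r / c + w / c + n - 1))) := by
  classical
  have hdisj : Set.PairwiseDisjoint ↑({x | redCount x = k} : Finset (Fin n → Bool))
      (patternSet X) := (pairwise_disjoint_patternSet X).set_pairwise _
  have hmeas : ∀ x ∈ ({x | redCount x = k} : Finset (Fin n → Bool)),
      MeasurableSet (patternSet X x) := fun x _ => measurableSet_patternSet X hXm x
  have hmass : ∑ x : Fin n → Bool with redCount x = k, μ.real (patternSet X x) =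
      #{x : Fin n → Bool | redCount x = k} * polyaWeight n r w c k := by
    rw [Finset.sum_congr rfl fun x hx => by
      rw [measureReal_patternSet hr hw hlaw, (Finset.mem_filter.mp hx).2]]
    simp
  have hsum := sum_setIntegral_patternSet_sq_sub_mul hXm hX'm hX01 hX'01 hr hw hlaw hX' k
  rw [setOf_sum_eq_eq_biUnion_patternSet hX01, integral_biUnion_finset _ hmeas hdisj fun _ _ =>
      (integrable_sq_sub_of_zero_or_one hX'm (hXm i) hX'01 (hX01 i)).integrableOn,
    measureReal_biUnion_finset hdisj hmeas, hmass]
  have hR : (0 : ℝ) < r + w + c * (n - 1 : ℝ) := by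
    have : (1 : ℝ) ≤ n := by exact_mod_cast hn
    have : (0 : ℝ) < r := by exact_mod_cast hr
    positivity
  have hD : (r : ℝ) / c + w / c + n - 1 = (r + w + c * (n - 1 : ℝ)) / c := by
    field_simp; ring
  rw [hD]
  field_simp
  linear_combination hsum

end Polya

/-- Second regression property of the Pólya urn exchangeable pair:
`E[(W' - W)² | W] = ((2n+b-a)W - 2nW² + a)/(n²(a+b+n-1))`; equivalently, with
`λ = 1/(n(a+b+n-1))`, `(1/(2λ)) E[(W'-W)² | W] = W(1-W) + ((b-a)/(2n)) W + a/(2n)`. -/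
theorem polya_second_regression
    {Ω : Type*} [MeasurableSpace Ω] (μ : Measure Ω) [IsProbabilityMeasure μ]
    (n r w c : ℕ) (hn : 0 < n) (hr : 0 < r) (hw : 0 < w) (hc : 0 < c)
    (X : Fin n → Ω → ℝ) (X' : Ω → ℝ)
    (hXm : ∀ j, Measurable (X j)) (hX'm : Measurable X')
    (hXval : ∀ j ω, X j ω = 0 ∨ X j ω = 1) (hX'val : ∀ ω, X' ω = 0 ∨ X' ω = 1)
    (hjoint : ∀ x : Fin n → Bool,
      μ {ω | ∀ j, X j ω = if x j then 1 else 0} = ENNReal.ofReal (polyaPMF n r w c x))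
    (hcond : ∀ x : Fin n → Bool,
      μ ({ω | X' ω = 1} ∩ {ω | ∀ j, X j ω = if x j then 1 else 0}) *
          μ {ω | ∀ j : Fin n, (j : ℕ) < n - 1 → X j ω = if x j then 1 else 0} =
        μ {ω | ∀ j, X j ω = if x j then 1 else 0} *
          μ ({ω | X ⟨n - 1, Nat.sub_lt hn Nat.one_pos⟩ ω = 1} ∩
            {ω | ∀ j : Fin n, (j : ℕ) < n - 1 → X j ω = if x j then 1 else 0}))
    (A B : ℝ) (hA : A = (r : ℝ) / c) (hB : B = (w : ℝ) / c)
    (W W' : Ω → ℝ)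
    (hW : W = fun ω => (∑ j, X j ω) / n)
    (hW' : W' = fun ω => W ω - X ⟨n - 1, Nat.sub_lt hn Nat.one_pos⟩ ω / n + X' ω / n) :
    (μ[(fun ω => (W' ω - W ω) ^ 2) | MeasurableSpace.comap W inferInstance] =ᵐ[μ]
      fun ω => ((2 * n + B - A) * W ω - 2 * n * (W ω) ^ 2 + A) /
        (n ^ 2 * (A + B + n - 1))) ∧
    (μ[(fun ω => (W' ω - W ω) ^ 2) | MeasurableSpace.comap W inferInstance] =ᵐ[μ]
      fun ω => 2 * (1 / (n * (A + B + n - 1))) *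
        (W ω * (1 - W ω) + (B - A) / (2 * n) * W ω + A / (2 * n))) := by
  subst hA hB
  set last : Fin n := ⟨n - 1, Nat.sub_lt hn Nat.one_pos⟩
  have hX'last : IsResampling μ X X' last := fun x => by
    have h := hcond x
    simp only [val_lt_sub_one_iff_ne hn] at h
    exact h
  have hsq : (fun ω => (W' ω - W ω) ^ 2) = fun ω => (X' ω - X last ω) ^ 2 / n ^ 2 := by
    funext ω; rw [hW']; field_simp; ring
  have hfiber : ∀ k : ℕ, W ⁻¹' {(k : ℝ) / n} = {ω | ∑ j, X j ω = k} := fun k => by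
    ext ω; simp [hW, div_left_inj' (Nat.cast_pos (α := ℝ)|>.mpr hn).ne']
  have hrange : ∀ ω, W ω ∈ Finset.univ.image fun x : Fin n → Bool => (redCount x : ℝ) / n :=
    fun ω => Finset.mem_image.mpr ⟨_, Finset.mem_univ _, by
      rw [hW, ← sum_eq_redCount_of_mem_patternSet (mem_patternSet_decide X hXval ω)]⟩
  have key := condExp_comap_ae_eq_comp_of_finset
    (hW ▸ (Finset.measurable_sum _ fun j _ => hXm j).div_const _) _ hrange
    (φ := fun v => ((2 * n + w / c - r / c) * v - 2 * n * v ^ 2 + r / c) /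
      (n ^ 2 * (r / c + w / c + n - 1))) (by fun_prop)
    (hsq ▸ (integrable_sq_sub_of_zero_or_one hX'm (hXm last) hX'val (hXval last)).div_const _)
    (by
      simpa only [Finset.forall_mem_image, hfiber, hsq, integral_div] using fun x _ =>
        setIntegral_setOf_sum_eq_sq_sub_div hXm hX'm hXval hX'val hn hr hw hc hjoint hX'last
          (redCount x))
  refine ⟨key, key.trans (ae_of_all _ fun ω => ?_)⟩
  field_simp
  ring
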